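/- Let ℓ > 0, let R = [a, a+ℓ] × [b, b+ℓ] be an axis-aligned square in ℝ², and let TL(R) = [a−2ℓ, a+3ℓ] × [b−2ℓ, b+3ℓ]. Let S be a finite set of points in ℝ² with S ∩ R ≠ ∅. If q ∈ R and u, v ∈ S are two points both nearest to q in S (i.e., dist(q, u) = dist(q, v) and dist(q, u) ≤ dist(q, t) for all t ∈ S), then both u and v belong to TL(R). (This is the fact that the pairs of points of S whose bisectors support edges of the Voronoi diagram of S within R can be determined from S ∩ TL(R) alone.) -/

import Mathlib

/-- The Euclidean plane. -/
abbrev E2 := EuclideanSpace ℝ (Fin 2)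

/-- The closed axis-aligned square `[a, a+ℓ] × [b, b+ℓ]`. -/
def square (a b ℓ : ℝ) : Set E2 :=
  {p | p 0 ∈ Set.Icc a (a + ℓ) ∧ p 1 ∈ Set.Icc b (b + ℓ)}

/-- For the square `R = [a, a+ℓ] × [b, b+ℓ]`, the concentric square
`TL(R) = [a−2ℓ, a+3ℓ] × [b−2ℓ, b+3ℓ]` of side `5ℓ`. -/
def TL (a b ℓ : ℝ) : Set E2 := square (a - 2*ℓ) (b - 2*ℓ) (5*ℓ)

section Square

variable {a b ℓ : ℝ} {x y : E2}

lemma dist_apply_le_of_mem_square (hx : x ∈ square a b ℓ) (hy : y ∈ square a b ℓ) (i : Fin 2) :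
    dist (x i) (y i) ≤ ℓ := by
  obtain ⟨⟨hx₀, hx₀'⟩, hx₁, hx₁'⟩ := hx
  obtain ⟨⟨hy₀, hy₀'⟩, hy₁, hy₁'⟩ := hy
  rw [Real.dist_eq, abs_sub_le_iff]
  fin_cases i <;> constructor <;> simp only [Fin.zero_eta, Fin.mk_one] <;> linarith

lemma dist_le_of_mem_square (hx : x ∈ square a b ℓ) (hy : y ∈ square a b ℓ) :
    dist x y ≤ 2 * ℓ := by
  have hℓ : 0 ≤ ℓ := by linarith [hx.1.1, hx.1.2]
  have hcoord (i : Fin 2) : dist (x i) (y i) ^ 2 ≤ ℓ ^ 2 :=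
    pow_le_pow_left₀ dist_nonneg (dist_apply_le_of_mem_square hx hy i) 2
  rw [EuclideanSpace.dist_eq, Real.sqrt_le_left (by positivity), Fin.sum_univ_two]
  nlinarith [hcoord 0, hcoord 1]

lemma closedBall_subset_TL {q : E2} (hq : q ∈ square a b ℓ) :
    Metric.closedBall q (2 * ℓ) ⊆ TL a b ℓ := by
  intro w hw
  have hdist (i : Fin 2) : |q i - w i| ≤ 2 * ℓ :=
    (PiLp.dist_apply_le q w i).trans (Metric.mem_closedBall'.1 hw)
  obtain ⟨⟨hq₀, hq₀'⟩, hq₁, hq₁'⟩ := hq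
  have h₀ := abs_sub_le_iff.1 (hdist 0)
  have h₁ := abs_sub_le_iff.1 (hdist 1)
  refine ⟨⟨?_, ?_⟩, ?_, ?_⟩ <;> linarith [h₀.1, h₀.2, h₁.1, h₁.2]

end Square

theorem stmt_4_general (ℓ a b : ℝ) (S : Finset E2)
    (hSR : ∃ p ∈ S, p ∈ square a b ℓ) (q : E2) (hq : q ∈ square a b ℓ)
    (u v : E2)
    (huv : dist q u = dist q v) (hmin : ∀ t ∈ S, dist q u ≤ dist q t) :
    u ∈ TL a b ℓ ∧ v ∈ TL a b ℓ := by
  obtain ⟨p, hpS, hpR⟩ := hSR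
  have hqu : dist q u ≤ 2 * ℓ := (hmin p hpS).trans (dist_le_of_mem_square hq hpR)
  exact ⟨closedBall_subset_TL hq (Metric.mem_closedBall'.2 hqu),
    closedBall_subset_TL hq (Metric.mem_closedBall'.2 (huv ▸ hqu))⟩

theorem stmt_4 (ℓ a b : ℝ) (hℓ : 0 < ℓ) (S : Finset E2)
    (hSR : ∃ p ∈ S, p ∈ square a b ℓ) (q : E2) (hq : q ∈ square a b ℓ)
    (u v : E2) (hu : u ∈ S) (hv : v ∈ S)
    (huv : dist q u = dist q v) (hmin : ∀ t ∈ S, dist q u ≤ dist q t) :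
    u ∈ TL a b ℓ ∧ v ∈ TL a b ℓ :=
  stmt_4_general ℓ a b S hSR q hq u v huv hmin
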